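/- For each fixed d ≥ 1, the function n ↦ |P_n^d| agrees with a polynomial in n of degree d with rational coefficients and leading coefficient 2^{d-1}/d!. -/

import Mathlib

/-!
For `d ≥ 1` a point of `ℤ^d` is reachable in exactly `n` steps iff its `ℓ¹`-norm is at most `n`
and has the parity of `n`: spare steps are spent in pairs going back and forth. Fixing the first
coordinate `t` leaves a point of `ℓ¹`-norm at most `n - |t|` in one dimension less, so
`|P_n^{d+1}| = |P_n^d| + 2 ∑_{m<n} |P_m^d|`. Summing a polynomial of degree `k` over `m < n` gives,
via the Bernoulli polynomials, a polynomial of degree `k + 1` whose leading coefficient is divided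
by `k + 1`; induction from `|P_n^1| = n + 1` gives the leading coefficient `2^{d-1}/d!`.
-/

open Finset

/-- The set of positions in `ℤ^d` reachable from the origin in exactly `n` steps,
each step being a standard unit vector or its negative. -/
def P (d n : ℕ) : Set (Fin d → ℤ) :=
  {x | ∃ f : Fin n → Fin d → ℤ,
    (∀ i, ∃ j : Fin d, f i = Pi.single j 1 ∨ f i = Pi.single j (-1)) ∧
    x = ∑ i, f i}

def l1Norm {d : ℕ} (x : Fin d → ℤ) : ℕ := ∑ i, (x i).natAbs

section L1Norm

variable {d : ℕ}

lemma natAbs_le_l1Norm (x : Fin d → ℤ) (i : Fin d) : (x i).natAbs ≤ l1Norm x :=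
  single_le_sum (f := fun i => (x i).natAbs) (fun _ _ => Nat.zero_le _) (mem_univ i)

lemma l1Norm_add_single (x : Fin d → ℤ) (j : Fin d) (c : ℤ) :
    l1Norm (x + Pi.single j c) + (x j).natAbs = l1Norm x + (x j + c).natAbs := by
  have h_off : ∀ i ∈ univ.erase j, ((x + Pi.single j c : Fin d → ℤ) i).natAbs = (x i).natAbs :=
    fun i hi => by simp [Pi.single_eq_of_ne (ne_of_mem_erase hi)]
  rw [l1Norm, l1Norm, ← add_sum_erase _ _ (mem_univ j), ← add_sum_erase _ _ (mem_univ j),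
    sum_congr rfl h_off]
  simp only [Pi.add_apply, Pi.single_eq_same]
  ring

lemma l1Norm_fin_one (x : Fin 1 → ℤ) : l1Norm x = (x 0).natAbs := by
  simp [l1Norm]

lemma l1Norm_cons (t : ℤ) (y : Fin d → ℤ) :
    l1Norm (Fin.cons t y : Fin (d + 1) → ℤ) = t.natAbs + l1Norm y := by
  simp [l1Norm, Fin.sum_univ_succ]

end L1Norm

section Walks

variable {d n : ℕ} {x : Fin d → ℤ}

lemma mem_P_zero : x ∈ P d 0 ↔ x = 0 :=
  ⟨fun ⟨_, _, hx⟩ => by simpa using hx, fun hx => ⟨Fin.elim0, fun i => i.elim0, by simp [hx]⟩⟩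

lemma mem_P_succ : x ∈ P d (n + 1) ↔
    ∃ y ∈ P d n, ∃ j, x = y + Pi.single j 1 ∨ x = y + Pi.single j (-1) := by
  constructor
  · rintro ⟨f, hf, rfl⟩
    obtain ⟨j, hj⟩ := hf (Fin.last n)
    refine ⟨_, ⟨fun i => f i.castSucc, fun i => hf _, rfl⟩, j, ?_⟩
    rw [Fin.sum_univ_castSucc]
    rcases hj with hj | hj <;> simp [hj]
  · rintro ⟨_, ⟨f, hf, rfl⟩, j, hx⟩
    refine ⟨Fin.snoc f (x - ∑ i, f i), fun i => ?_, by simp [Fin.sum_univ_castSucc]⟩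
    induction i using Fin.lastCases with
    | last => exact ⟨j, by rcases hx with rfl | rfl <;> simp⟩
    | cast i => simpa using hf i

lemma l1Norm_of_mem_P (hx : x ∈ P d n) : l1Norm x ≤ n ∧ l1Norm x % 2 = n % 2 := by
  induction n generalizing x with
  | zero => simp [mem_P_zero.mp hx, l1Norm]
  | succ n ih =>
    obtain ⟨y, hy, j, rfl | rfl⟩ := mem_P_succ.mp hx
    · have := l1Norm_add_single y j 1
      have := ih hy
      omega
    · have := l1Norm_add_single y j (-1)
      have := ih hy
      omega

lemma mem_P_of_l1Norm (hd : 1 ≤ d) (hle : l1Norm x ≤ n) (hpar : l1Norm x % 2 = n % 2) :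
    x ∈ P d n := by
  induction n generalizing x with
  | zero =>
    refine mem_P_zero.mpr (funext fun i => ?_)
    have := natAbs_le_l1Norm x i
    simp only [Pi.zero_apply]
    omega
  | succ n ih =>
    -- on the sphere of radius `n + 1` we must step towards the origin, inside any step will do
    obtain ⟨j, c, hc, hstep⟩ : ∃ j c, (c = 1 ∨ c = -1) ∧ l1Norm (x + Pi.single j c) ≤ n := by
      by_cases hsphere : l1Norm x = n + 1
      · obtain ⟨j, hj⟩ : ∃ j, x j ≠ 0 := by
          by_contra! h
          simp [l1Norm, h] at hsphere
        rcases lt_or_gt_of_ne hj with hneg | hpos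
        · exact ⟨j, 1, Or.inl rfl, by have := l1Norm_add_single x j 1; omega⟩
        · exact ⟨j, -1, Or.inr rfl, by have := l1Norm_add_single x j (-1); omega⟩
      · exact ⟨⟨0, hd⟩, 1, Or.inl rfl, by have := l1Norm_add_single x ⟨0, hd⟩ 1; omega⟩
    have hy : x + Pi.single j c ∈ P d n :=
      ih hstep (by have := l1Norm_add_single x j c; omega)
    refine mem_P_succ.mpr ⟨_, hy, j, ?_⟩
    rcases hc with rfl | rfl
    · right; simp [add_assoc, ← Pi.single_add]
    · left; simp [add_assoc, ← Pi.single_add]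

end Walks

noncomputable def parityBall (d n : ℕ) : Finset (Fin d → ℤ) :=
  {x ∈ Fintype.piFinset fun _ => Icc (-(n : ℤ)) n | l1Norm x ≤ n ∧ l1Norm x % 2 = n % 2}

section ParityBall

variable {d n : ℕ} {x : Fin d → ℤ}

lemma mem_parityBall : x ∈ parityBall d n ↔ l1Norm x ≤ n ∧ l1Norm x % 2 = n % 2 := by
  refine ⟨fun hx => (mem_filter.mp hx).2, fun hx => mem_filter.mpr ⟨?_, hx⟩⟩
  refine Fintype.mem_piFinset.mpr fun i => mem_Icc.mpr ?_
  have := natAbs_le_l1Norm x i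
  omega

lemma coe_parityBall (hd : 1 ≤ d) : (parityBall d n : Set (Fin d → ℤ)) = P d n := by
  ext x
  rw [mem_coe, mem_parityBall]
  exact ⟨fun hx => mem_P_of_l1Norm hd hx.1 hx.2, l1Norm_of_mem_P⟩

lemma card_parityBall_one (n : ℕ) : #(parityBall 1 n) = n + 1 := by
  rw [← card_range (n + 1)]
  refine (card_nbij' (fun (k : ℕ) (_ : Fin 1) => 2 * (k : ℤ) - n)
    (fun x => ((x 0 + n) / 2).toNat) (fun k hk => ?_) (fun x hx => ?_) (fun k hk => ?_)
    (fun x hx => funext (Fin.forall_fin_one.mpr ?_))).symm <;>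
  simp only [coe_range, Set.mem_Iio, mem_coe, mem_parityBall, l1Norm_fin_one] at * <;>
  omega

lemma card_filter_parityBall_succ {t : ℤ} (ht : t.natAbs ≤ n) :
    #{x ∈ parityBall (d + 1) n | x 0 = t} = #(parityBall d (n - t.natAbs)) := by
  refine card_nbij' Fin.tail (fun y => (Fin.cons t y : Fin (d + 1) → ℤ)) ?_ ?_ ?_ ?_
  · intro x hx
    simp only [mem_coe, mem_filter, mem_parityBall] at hx ⊢
    obtain ⟨hx, rfl⟩ := hx
    have := l1Norm_cons (x 0) (Fin.tail x)
    rw [Fin.cons_self_tail] at this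
    omega
  · intro y hy
    simp only [mem_coe, mem_filter, mem_parityBall, l1Norm_cons] at hy ⊢
    exact ⟨by omega, rfl⟩
  · intro x hx
    rw [← (mem_filter.mp hx).2]
    exact Fin.cons_self_tail x
  · intro y _
    exact Fin.tail_cons _ _

lemma sum_Icc_neg_natAbs {M : Type*} [AddCommMonoid M] (g : ℕ → M) (n : ℕ) :
    ∑ t ∈ Icc (-(n : ℤ)) n, g t.natAbs = g 0 + 2 • ∑ k ∈ range n, g (k + 1) := by
  induction n with
  | zero => simp
  | succ n ih =>
    have hIcc : Icc (-((n + 1 : ℕ) : ℤ)) (n + 1 : ℕ) =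
        insert (-((n + 1 : ℕ) : ℤ)) (insert ((n + 1 : ℕ) : ℤ) (Icc (-(n : ℤ)) n)) := by
      ext t
      simp only [mem_Icc, mem_insert]
      omega
    rw [hIcc, sum_insert (by simp only [mem_Icc, mem_insert]; omega),
      sum_insert (by simp only [mem_Icc]; omega), ih, sum_range_succ, smul_add, two_smul]
    simp only [Int.natAbs_neg, Int.natAbs_natCast]
    abel

lemma card_parityBall_succ (d n : ℕ) :
    #(parityBall (d + 1) n) = #(parityBall d n) + 2 * ∑ m ∈ range n, #(parityBall d m) := by
  have hmaps : ∀ x ∈ parityBall (d + 1) n, x 0 ∈ Icc (-(n : ℤ)) n := fun x hx => by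
    have := natAbs_le_l1Norm x 0
    have := (mem_parityBall.mp hx).1
    rw [mem_Icc]
    omega
  rw [card_eq_sum_card_fiberwise hmaps,
    sum_congr rfl fun t ht => card_filter_parityBall_succ (by rw [mem_Icc] at ht; omega),
    sum_Icc_neg_natAbs (fun k => #(parityBall d (n - k))), smul_eq_mul, Nat.sub_zero,
    ← sum_range_reflect]
  congr 2
  refine sum_congr rfl fun k hk => ?_
  rw [mem_range] at hk
  rw [show n - (n - 1 - k + 1) = k by omega]

end ParityBall

namespace Polynomial

noncomputable def powerSum (k : ℕ) : ℚ[X] :=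
  C ((k + 1 : ℚ)⁻¹) * (bernoulli (k + 1) - C (_root_.bernoulli (k + 1)))

lemma eval_powerSum (k n : ℕ) : (powerSum k).eval (n : ℚ) = ∑ m ∈ range n, (m : ℚ) ^ k := by
  rw [powerSum, eval_mul, eval_C, eval_sub, eval_C, ← sum_range_pow_eq_bernoulli_sub,
    inv_mul_cancel_left₀ (by positivity)]

lemma natDegree_powerSum_le (k : ℕ) : (powerSum k).natDegree ≤ k + 1 := by
  refine (natDegree_C_mul_le _ _).trans ?_
  rw [natDegree_sub_C, natDegree_le_iff_coeff_eq_zero]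
  intro i hi
  simp [coeff_bernoulli, not_le.mpr hi]

lemma coeff_powerSum_succ (k : ℕ) : (powerSum k).coeff (k + 1) = (k + 1 : ℚ)⁻¹ := by
  simp [powerSum, coeff_bernoulli]

lemma exists_eval_eq_sum_range (p : ℚ[X]) :
    ∃ q : ℚ[X], q.natDegree ≤ p.natDegree + 1 ∧
      q.coeff (p.natDegree + 1) = p.leadingCoeff / (p.natDegree + 1) ∧
      ∀ n : ℕ, q.eval (n : ℚ) = ∑ m ∈ range n, p.eval (m : ℚ) := by
  refine ⟨∑ k ∈ range (p.natDegree + 1), C (p.coeff k) * powerSum k, ?_, ?_, fun n => ?_⟩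
  · refine natDegree_sum_le_of_forall_le _ _ fun k hk => (natDegree_C_mul_le _ _).trans ?_
    exact (natDegree_powerSum_le k).trans (by rw [mem_range] at hk; omega)
  · rw [finsetSum_coeff, sum_eq_single_of_mem _ (self_mem_range_succ _)]
    · rw [coeff_C_mul, coeff_powerSum_succ, leadingCoeff, div_eq_mul_inv]
    · intro k hk hne
      rw [mem_range] at hk
      rw [coeff_C_mul, coeff_eq_zero_of_natDegree_lt ((natDegree_powerSum_le k).trans_lt
        (by omega)), mul_zero]
  · simp only [eval_finsetSum, eval_mul, eval_C, eval_powerSum, mul_sum]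
    rw [sum_comm]
    exact sum_congr rfl fun m _ => (eval_eq_sum_range _).symm

end Polynomial

open Polynomial

theorem exists_polynomial_card_parityBall (d : ℕ) (hd : 1 ≤ d) :
    ∃ p : ℚ[X], p.natDegree = d ∧ p.leadingCoeff = 2 ^ (d - 1) / (d.factorial : ℚ) ∧
      ∀ n : ℕ, p.eval (n : ℚ) = #(parityBall d n) := by
  induction d, hd using Nat.le_induction with
  | base =>
    refine ⟨X + C 1, natDegree_X_add_C 1, ?_, fun n => by simp [card_parityBall_one]⟩
    rw [leadingCoeff_X_add_C]
    norm_num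
  | succ d hd ih =>
    obtain ⟨p, hdeg, hlead, heval⟩ := ih
    obtain ⟨q, hq_deg, hq_coeff, hq_eval⟩ := exists_eval_eq_sum_range p
    have hcoeff : (p + C 2 * q).coeff (d + 1) = 2 ^ d / ((d + 1).factorial : ℚ) := by
      rw [coeff_add, coeff_C_mul, coeff_eq_zero_of_natDegree_lt (by omega), ← hdeg, hq_coeff,
        hlead, hdeg, Nat.factorial_succ]
      obtain ⟨e, rfl⟩ := Nat.exists_eq_add_of_le' hd
      push_cast
      field_simp
      ring
    have hdeg' : (p + C 2 * q).natDegree = d + 1 := by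
      refine natDegree_eq_of_le_of_coeff_ne_zero ?_ (by rw [hcoeff]; positivity)
      exact natDegree_add_le_of_degree_le (by omega) ((natDegree_C_mul_le _ _).trans (by omega))
    refine ⟨p + C 2 * q, hdeg', by rw [leadingCoeff, hdeg', hcoeff, Nat.add_sub_cancel],
      fun n => ?_⟩
    simp only [eval_add, eval_mul, eval_C, heval, hq_eval, card_parityBall_succ]
    push_cast
    ring

theorem stmt_7 (d : ℕ) (hd : 1 ≤ d) :
    ∃ p : Polynomial ℚ, p.natDegree = d ∧
      p.leadingCoeff = 2 ^ (d - 1) / (d.factorial : ℚ) ∧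
      ∀ n : ℕ, p.eval (n : ℚ) = Nat.card (P d n) := by
  obtain ⟨p, hdeg, hlead, heval⟩ := exists_polynomial_card_parityBall d hd
  refine ⟨p, hdeg, hlead, fun n => ?_⟩
  rw [heval, ← coe_parityBall hd, Nat.card_coe_set_eq, Set.ncard_coe_finset]
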